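/- arXiv:2104.13825 — 4 statements merged into one kernel-verified Lean document; each statement's English description precedes it below -/
import Mathlib

section
/- Let Z be a real symmetric positive semidefinite matrix acting on ⊕_{m=1}^M V_m (each V_m a finite-dimensional real inner product space), with block decomposition Z = ((Z)_{i,j})_{i,j=1}^M. Suppose each diagonal block (Z)_{m,m} equals the identity on V_m, and that (Z)_{i,j} = 0 whenever i ≠ j and {i,j} is not an edge of a given graph G on the vertex set {1,…,M}. Then ‖Z − I‖ ≤ Δ(G), where Δ(G) is the maximum degree of G and ‖·‖ is the operator norm. -/
/-!
Split `x` into its block components `xᵢ`. Since `Z - 1` vanishes on the diagonal blocks and on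
the blocks of non-edges, `⟪x, (Z - 1) x⟫ = ∑_{i ~ j} ⟪xᵢ, Z xⱼ⟫`. Positivity of `Z` on `xᵢ ± xⱼ`
gives `2 |⟪xᵢ, Z xⱼ⟫| ≤ ‖xᵢ‖² + ‖xⱼ‖²`, so summing over the edges counts each `‖xᵢ‖²` at most
`Δ(G)` times. For the symmetric matrix `Z - 1` this bound on the quadratic form is a bound on the
operator norm.
-/

open Matrix

/-- Operator norm of a real matrix viewed as a map between Euclidean spaces. -/
noncomputable def matOpNorm {m n : Type*} [Fintype m] [Fintype n] [DecidableEq n]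
    (A : Matrix m n ℝ) : ℝ :=
  ‖LinearMap.toContinuousLinearMap (Matrix.toEuclideanLin A)‖

theorem matOpNorm_le_of_abs_dotProduct_mulVec_le {n : Type*} [Fintype n] [DecidableEq n]
    {A : Matrix n n ℝ} (hA : A.IsHermitian) {c : ℝ} (hc : 0 ≤ c)
    (h : ∀ v : n → ℝ, |v ⬝ᵥ (A *ᵥ v)| ≤ c * (v ⬝ᵥ v)) : matOpNorm A ≤ c := by
  rw [matOpNorm, ContinuousLinearMap.norm_eq_iSup_rayleighQuotient _
    (isSymmetric_toEuclideanLin_iff.mpr hA)]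
  refine ciSup_le fun x => ?_
  rw [ContinuousLinearMap.rayleighQuotient, abs_div, abs_sq]
  refine div_le_of_le_mul₀ (sq_nonneg _) hc ?_
  have hnorm : ‖x‖ ^ 2 = x ⬝ᵥ x := by
    rw [← real_inner_self_eq_norm_sq, EuclideanSpace.inner_eq_star_dotProduct, star_trivial]
  simpa [ContinuousLinearMap.reApplyInnerSelf_apply, EuclideanSpace.inner_eq_star_dotProduct,
    hnorm, dotProduct_comm] using h x

theorem Matrix.PosSemidef.two_mul_abs_dotProduct_mulVec_le {n : Type*} [Fintype n]
    {Z : Matrix n n ℝ} (hZ : Z.PosSemidef) (u v : n → ℝ) :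
    2 * |u ⬝ᵥ (Z *ᵥ v)| ≤ u ⬝ᵥ (Z *ᵥ u) + v ⬝ᵥ (Z *ᵥ v) := by
  have hsymm : v ⬝ᵥ (Z *ᵥ u) = u ⬝ᵥ (Z *ᵥ v) := by
    rw [← dotProduct_transpose_mulVec, ← conjTranspose_eq_transpose_of_trivial, hZ.1.eq]
  have hadd := hZ.dotProduct_mulVec_nonneg (u + v)
  have hsub := hZ.dotProduct_mulVec_nonneg (u - v)
  simp only [star_trivial, mulVec_add, mulVec_sub, add_dotProduct, dotProduct_add,
    sub_dotProduct, dotProduct_sub, hsymm] at hadd hsub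
  cases abs_cases (u ⬝ᵥ (Z *ᵥ v)) <;> linarith

section Blocks

variable {ι R : Type*} {κ : ι → Type*} [DecidableEq ι] [Fintype ι] [Semiring R]

def blockRestrict (x : (Σ i, κ i) → R) (i : ι) : (Σ i, κ i) → R :=
  fun p => if p.1 = i then x p else 0

theorem sum_blockRestrict (x : (Σ i, κ i) → R) : ∑ i, blockRestrict x i = x := by
  funext p
  simp [blockRestrict]

variable [∀ i, Fintype (κ i)]

theorem blockRestrict_dotProduct_mulVec_blockRestrict_eq_zero
    {B : Matrix (Σ i, κ i) (Σ i, κ i) R} {i j : ι} (hB : ∀ a b, B ⟨i, a⟩ ⟨j, b⟩ = 0)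
    (x y : (Σ i, κ i) → R) : blockRestrict x i ⬝ᵥ (B *ᵥ blockRestrict y j) = 0 := by
  simp only [dotProduct, mulVec, Finset.mul_sum]
  refine Finset.sum_eq_zero fun ⟨k, a⟩ _ => Finset.sum_eq_zero fun ⟨l, b⟩ _ => ?_
  simp only [blockRestrict]
  split_ifs with hk hl
  · subst hk hl
    simp [hB]
  all_goals simp

theorem blockRestrict_dotProduct_blockRestrict_of_ne {i j : ι} (hij : i ≠ j)
    (x y : (Σ i, κ i) → R) : blockRestrict x i ⬝ᵥ blockRestrict y j = 0 := by
  refine Finset.sum_eq_zero fun ⟨k, a⟩ _ => ?_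
  simp only [blockRestrict]
  split_ifs with hi hj
  · exact absurd (hi.symm.trans hj) hij
  all_goals simp

theorem dotProduct_mulVec_eq_sum_blockRestrict (B : Matrix (Σ i, κ i) (Σ i, κ i) R)
    (x y : (Σ i, κ i) → R) :
    x ⬝ᵥ (B *ᵥ y) = ∑ i, ∑ j, blockRestrict x i ⬝ᵥ (B *ᵥ blockRestrict y j) := by
  conv_lhs => rw [← sum_blockRestrict x, ← sum_blockRestrict y]
  rw [mulVec_sum, sum_dotProduct]
  simp only [dotProduct_sum]

theorem dotProduct_eq_sum_blockRestrict (x y : (Σ i, κ i) → R) :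
    x ⬝ᵥ y = ∑ i, blockRestrict x i ⬝ᵥ blockRestrict y i := by
  conv_lhs => rw [← sum_blockRestrict x, ← sum_blockRestrict y]
  rw [sum_dotProduct]
  refine Finset.sum_congr rfl fun i _ => ?_
  rw [dotProduct_sum, Finset.sum_eq_single i (fun j _ hji => ?_) (by simp)]
  exact blockRestrict_dotProduct_blockRestrict_of_ne hji.symm x y

end Blocks

theorem SimpleGraph.sum_sum_ite_adj_eq_sum_degree_mul {V : Type*} [Fintype V]
    (G : SimpleGraph V) [DecidableRel G.Adj] (f : V → ℝ) :
    ∑ i, ∑ j, (if G.Adj i j then f i else 0) = ∑ i, G.degree i * f i := by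
  refine Finset.sum_congr rfl fun i _ => ?_
  rw [← Finset.sum_filter, Finset.sum_const, ← neighborFinset_eq_filter,
    card_neighborFinset_eq_degree, nsmul_eq_mul]

theorem SimpleGraph.abs_sum_le_maxDegree_mul_sum {V : Type*} [Fintype V]
    (G : SimpleGraph V) [DecidableRel G.Adj] {S : V → V → ℝ} {N : V → ℝ}
    (hN : ∀ i, 0 ≤ N i) (hS_zero : ∀ i j, ¬ G.Adj i j → S i j = 0)
    (hS_le : ∀ i j, G.Adj i j → 2 * |S i j| ≤ N i + N j) :
    |∑ i, ∑ j, S i j| ≤ G.maxDegree * ∑ i, N i := by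
  have hpair : ∀ i j, 2 * |S i j| ≤
      (if G.Adj i j then N i else 0) + (if G.Adj i j then N j else 0) := by
    intro i j
    by_cases h : G.Adj i j
    · simpa [h] using hS_le i j h
    · simp [h, hS_zero i j h]
  have hswap : ∑ i, ∑ j, (if G.Adj i j then N j else 0)
      = ∑ i, ∑ j, (if G.Adj i j then N i else 0) := by
    rw [Finset.sum_comm]
    simp only [G.adj_comm]
  have hdeg : ∑ i, G.degree i * N i ≤ G.maxDegree * ∑ i, N i := by
    rw [Finset.mul_sum]
    exact Finset.sum_le_sum fun i _ =>
      mul_le_mul_of_nonneg_right (by exact_mod_cast G.degree_le_maxDegree i) (hN i)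
  suffices 2 * |∑ i, ∑ j, S i j| ≤ 2 * ∑ i, G.degree i * N i by linarith
  calc 2 * |∑ i, ∑ j, S i j|
      ≤ 2 * ∑ i, ∑ j, |S i j| := by
        gcongr
        exact (Finset.abs_sum_le_sum_abs _ _).trans
          (Finset.sum_le_sum fun i _ => Finset.abs_sum_le_sum_abs _ _)
    _ = ∑ i, ∑ j, 2 * |S i j| := by simp only [Finset.mul_sum]
    _ ≤ ∑ i, ∑ j, ((if G.Adj i j then N i else 0) + (if G.Adj i j then N j else 0)) :=
        Finset.sum_le_sum fun i _ => Finset.sum_le_sum fun j _ => hpair i j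
    _ = 2 * ∑ i, G.degree i * N i := by
        simp only [Finset.sum_add_distrib, hswap, G.sum_sum_ite_adj_eq_sum_degree_mul]
        ring

/-- a PSD block matrix with identity diagonal blocks, whose
off-diagonal blocks are supported on the edges of a graph `G`, satisfies
`‖Z − I‖ ≤ Δ(G)`. -/
theorem norm_sub_one_le_maxDegree {M : ℕ} (dims : Fin M → ℕ)
    (Z : Matrix ((i : Fin M) × Fin (dims i)) ((i : Fin M) × Fin (dims i)) ℝ)
    (hpsd : Z.PosSemidef)
    (G : SimpleGraph (Fin M)) [DecidableRel G.Adj]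
    (hdiag : ∀ (m : Fin M) (a b : Fin (dims m)),
      Z ⟨m, a⟩ ⟨m, b⟩ = if a = b then 1 else 0)
    (hsupp : ∀ (i j : Fin M) (a : Fin (dims i)) (b : Fin (dims j)),
      i ≠ j → ¬ G.Adj i j → Z ⟨i, a⟩ ⟨j, b⟩ = 0) :
    matOpNorm (Z - 1) ≤ G.maxDegree := by
  have hentry : ∀ i j, ¬ G.Adj i j → ∀ a b, (Z - 1) ⟨i, a⟩ ⟨j, b⟩ = 0 := by
    intro i j hadj a b
    by_cases hij : i = j
    · subst hij
      simp [hdiag, one_apply]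
    · rw [Matrix.sub_apply, hsupp i j a b hij hadj,
        one_apply_ne fun h => hij (congrArg Sigma.fst h), sub_zero]
  have hblock : ∀ (x : _ → ℝ) i, blockRestrict x i ⬝ᵥ (Z *ᵥ blockRestrict x i) =
      blockRestrict x i ⬝ᵥ blockRestrict x i := by
    intro x i
    have := blockRestrict_dotProduct_mulVec_blockRestrict_eq_zero (hentry i i G.irrefl) x x
    rwa [sub_mulVec, dotProduct_sub, one_mulVec, sub_eq_zero] at this
  refine matOpNorm_le_of_abs_dotProduct_mulVec_le (hpsd.1.sub isHermitian_one) (by positivity)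
    fun x => ?_
  rw [dotProduct_mulVec_eq_sum_blockRestrict, dotProduct_eq_sum_blockRestrict x x]
  refine G.abs_sum_le_maxDegree_mul_sum (fun i => Finset.sum_nonneg fun _ _ => mul_self_nonneg _)
    (fun i j hnadj => blockRestrict_dotProduct_mulVec_blockRestrict_eq_zero (hentry i j hnadj) x x)
    fun i j hadj => ?_
  rw [sub_mulVec, dotProduct_sub, one_mulVec, blockRestrict_dotProduct_blockRestrict_of_ne hadj.ne,
    sub_zero, ← hblock, ← hblock]
  exact hpsd.two_mul_abs_dotProduct_mulVec_le _ _
end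

section
/- Let h be a real symmetric positive definite matrix on ℓ²(Λ), and let Λ = Λ₁ ∪ ⋯ ∪ Λ_M be a partition with h_{Λ_m} the restriction (compression) of h to ℓ²(Λ_m), each assumed positive definite. Suppose the off-diagonal blocks ι_{Λ_i}* h ι_{Λ_j} vanish whenever the graph distance d_Λ(Λ_i, Λ_j) ≠ 1, and let G_M be the dual graph with vertices {Λ_m} and edges between subregions at distance 1. Let D⁻_β = ⊕_{m=1}^M h_{Λ_m}^{-1/2} tanh(β_m h_{Λ_m}^{1/2}) for any β = (β_1,…,β_M) with β_m ∈ (0, ∞]. Then ‖D⁻_β h^{1/2}‖ ≤ √(Δ(G_M) + 1), where Δ(G_M) is the maximum degree of G_M. -/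
/-!
Write `Q = h^{1/2}` and let `B_m` be the diagonal blocks of `D = D⁻_β`. Since `D` and `Q` are
symmetric, `‖D Q‖ = ‖Q D‖`, and `‖Q D v‖² = ⟨D v, h D v⟩`. Split `D v` into its components
`w_m = B_m v_m` on the subregions. Positivity of `h` gives
`2⟨w_m, h w_{m'}⟩ ≤ ⟨w_m, h w_m⟩ + ⟨w_{m'}, h w_{m'}⟩`, and cross terms between non-adjacent
subregions vanish, so `⟨D v, h D v⟩ ≤ (Δ + 1) ∑_m ⟨w_m, h_{Λ_m} w_m⟩`. Finally
`B_m h_{Λ_m} B_m = tanh²(β_m h_{Λ_m}^{1/2}) ≤ 1`, whence `⟨w_m, h_{Λ_m} w_m⟩ ≤ ‖v_m‖²`.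
-/

open Matrix
open scoped ENNReal

/-- 1-norm distance on `ℤ^d`. -/
def dist1 {d : ℕ} (x y : Fin d → ℤ) : ℤ := ∑ i, |x i - y i|

/-- The compression of `h` to the subregion `part⁻¹(m)`. -/
def blockMat {d M : ℕ} (Λ : Finset (Fin d → ℤ)) (part : Λ → Fin M)
    (h : Matrix Λ Λ ℝ) (m : Fin M) :
    Matrix {x : Λ // part x = m} {x : Λ // part x = m} ℝ :=
  fun a b => h a.1 b.1

/-- `tanh(β·λ)`, with the convention `tanh(∞·λ) = 1` (for `λ > 0`). -/
noncomputable def tanhE (β : ℝ≥0∞) (lam : ℝ) : ℝ :=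
  if β = ⊤ then 1 else Real.tanh (β.toReal * lam)

/-- The block-diagonal operator `D⁻_β = ⊕_m h_{Λ_m}^{-1/2} tanh(β_m h_{Λ_m}^{1/2})`,
each block being defined by the spectral functional calculus. -/
noncomputable def Dneg {d M : ℕ} (Λ : Finset (Fin d → ℤ)) (part : Λ → Fin M)
    (h : Matrix Λ Λ ℝ) (β : Fin M → ℝ≥0∞)
    (hb : ∀ m, (blockMat Λ part h m).PosDef) : Matrix Λ Λ ℝ :=
  fun x y =>
    if hxy : part x = part y then
      ((hb (part x)).1.cfc fun μ =>
        (Real.sqrt μ)⁻¹ * tanhE (β (part x)) (Real.sqrt μ)) ⟨x, rfl⟩ ⟨y, hxy.symm⟩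
    else 0

open Finset
open scoped MatrixOrder

theorem Fintype.sum_eq_sum_subtype_of_eq_zero {ι M : Type*} [Fintype ι] [AddCommMonoid M]
    (p : ι → Prop) [DecidablePred p] {f : ι → M} (hf : ∀ i, ¬p i → f i = 0) :
    ∑ i, f i = ∑ a : {i // p i}, f a := by
  rw [← Fintype.sum_subtype_add_sum_subtype p f,
    Fintype.sum_eq_zero (fun a : {i // ¬p i} => f a) fun a => hf a a.2, add_zero]

namespace SimpleGraph

variable {V : Type*} [Fintype V] (G : SimpleGraph V) [DecidableRel G.Adj]

theorem sum_sum_neighborFinset_comm {M : Type*} [AddCommMonoid M] (f : V → V → M) :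
    ∑ m, ∑ m' ∈ G.neighborFinset m, f m m' = ∑ m, ∑ m' ∈ G.neighborFinset m, f m' m :=
  Finset.sum_comm' fun m m' => by simp [G.adj_comm]

theorem sum_sum_le_maxDegree_add_one_mul_sum [DecidableEq V] (T : V → V → ℝ)
    (hdiag : ∀ m, 0 ≤ T m m) (hadj : ∀ m m', G.Adj m m' → T m m' + T m' m ≤ T m m + T m' m')
    (hzero : ∀ m m', m ≠ m' → ¬G.Adj m m' → T m m' = 0) :
    ∑ m, ∑ m', T m m' ≤ (G.maxDegree + 1) * ∑ m, T m m := by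
  have hsplit : ∀ m, ∑ m', T m m' = T m m + ∑ m' ∈ G.neighborFinset m, T m m' := fun m => by
    rw [← add_sum_erase _ _ (mem_univ m)]
    congr 1
    refine (sum_subset (fun m' hm' => ?_) fun m' hm' hn => ?_).symm
    · simpa using (G.ne_of_adj (by simpa using hm')).symm
    · exact hzero m m' (by simpa [eq_comm] using hm') (by simpa using hn)
  have hoff : 2 * ∑ m, ∑ m' ∈ G.neighborFinset m, T m m' ≤ 2 * ∑ m, G.degree m * T m m :=
    calc 2 * ∑ m, ∑ m' ∈ G.neighborFinset m, T m m'
        = ∑ m, ∑ m' ∈ G.neighborFinset m, (T m m' + T m' m) := by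
          rw [two_mul]
          nth_rw 2 [G.sum_sum_neighborFinset_comm]
          simp only [sum_add_distrib]
      _ ≤ ∑ m, ∑ m' ∈ G.neighborFinset m, (T m m + T m' m') :=
          sum_le_sum fun m _ => sum_le_sum fun m' hm' => hadj m m' (by simpa using hm')
      _ = 2 * ∑ m, G.degree m * T m m := by
          rw [two_mul, sum_congr rfl fun m _ => sum_add_distrib, sum_add_distrib,
            G.sum_sum_neighborFinset_comm fun _ m' => T m' m']
          simp [card_neighborFinset_eq_degree]
  calc ∑ m, ∑ m', T m m' = ∑ m, T m m + ∑ m, ∑ m' ∈ G.neighborFinset m, T m m' := by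
        rw [← sum_add_distrib]
        exact sum_congr rfl fun m _ => hsplit m
    _ ≤ ∑ m, T m m + ∑ m, (G.maxDegree : ℝ) * T m m := by
        gcongr ∑ m, T m m + ?_
        refine (le_of_mul_le_mul_left hoff two_pos).trans (sum_le_sum fun m _ => ?_)
        exact mul_le_mul_of_nonneg_right (by exact_mod_cast G.degree_le_maxDegree m) (hdiag m)
    _ = (G.maxDegree + 1) * ∑ m, T m m := by
        rw [← mul_sum]
        ring

end SimpleGraph

theorem Matrix.PosSemidef.dotProduct_mulVec_add_le {ι : Type*} [Fintype ι] {h : Matrix ι ι ℝ}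
    (hh : h.PosSemidef) (a b : ι → ℝ) :
    a ⬝ᵥ (h *ᵥ b) + b ⬝ᵥ (h *ᵥ a) ≤ a ⬝ᵥ (h *ᵥ a) + b ⬝ᵥ (h *ᵥ b) := by
  have := hh.dotProduct_mulVec_nonneg (a - b)
  simp only [star_trivial, mulVec_sub, dotProduct_sub, sub_dotProduct] at this
  linarith

section Partition

variable {ι κ : Type*} [DecidableEq κ]

def fiberPart (part : ι → κ) (w : ι → ℝ) (m : κ) : ι → ℝ :=
  fun i => if part i = m then w i else 0

theorem sum_fiberPart [Fintype κ] (part : ι → κ) (w : ι → ℝ) : ∑ m, fiberPart part w m = w := by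
  ext i
  simp [fiberPart, Finset.sum_apply]

variable [Fintype ι]

theorem fiberPart_dotProduct_mulVec_fiberPart (h : Matrix ι ι ℝ) (part : ι → κ) (w : ι → ℝ)
    (m m' : κ) :
    fiberPart part w m ⬝ᵥ (h *ᵥ fiberPart part w m') =
      (fun a : {i // part i = m} => w a) ⬝ᵥ
        (h.submatrix (↑) (↑) *ᵥ fun b : {i // part i = m'} => w b) := by
  rw [dotProduct, Fintype.sum_eq_sum_subtype_of_eq_zero (part · = m) fun i hi => by
    simp [fiberPart, hi]]
  refine sum_congr rfl fun a _ => ?_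
  simp only [fiberPart, a.2, if_true, mulVec, dotProduct]
  congr 1
  rw [Fintype.sum_eq_sum_subtype_of_eq_zero (part · = m') fun i hi => by simp [hi]]
  exact sum_congr rfl fun b _ => by simp [b.2]

theorem Matrix.PosSemidef.dotProduct_mulVec_le_maxDegree_add_one_mul [Fintype κ]
    {h : Matrix ι ι ℝ} (hh : h.PosSemidef) (part : ι → κ) (G : SimpleGraph κ) [DecidableRel G.Adj]
    (hcompat : ∀ x y, part x ≠ part y → ¬G.Adj (part x) (part y) → h x y = 0) (w : ι → ℝ) :
    w ⬝ᵥ (h *ᵥ w) ≤ (G.maxDegree + 1) * ∑ m, (fun a : {i // part i = m} => w a) ⬝ᵥ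
      (h.submatrix (↑) (↑) *ᵥ fun a : {i // part i = m} => w a) := by
  have hzero : ∀ m m', m ≠ m' → ¬G.Adj m m' →
      fiberPart part w m ⬝ᵥ (h *ᵥ fiberPart part w m') = 0 := fun m m' hne hadj => by
    rw [fiberPart_dotProduct_mulVec_fiberPart]
    refine Fintype.sum_eq_zero _ fun a => ?_
    rw [mulVec, dotProduct, Fintype.sum_eq_zero _ fun b => ?_, mul_zero]
    rw [submatrix_apply, hcompat a b (by rwa [a.2, b.2]) (by rwa [a.2, b.2]), zero_mul]
  calc w ⬝ᵥ (h *ᵥ w)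
      = ∑ m, ∑ m', fiberPart part w m ⬝ᵥ (h *ᵥ fiberPart part w m') := by
        conv_lhs => rw [← sum_fiberPart part w]
        simp only [mulVec_sum, dotProduct_sum, sum_dotProduct]
        exact sum_comm
    _ ≤ (G.maxDegree + 1) * ∑ m, fiberPart part w m ⬝ᵥ (h *ᵥ fiberPart part w m) :=
        G.sum_sum_le_maxDegree_add_one_mul_sum _
          (fun m => by simpa using hh.dotProduct_mulVec_nonneg (fiberPart part w m))
          (fun m m' _ => hh.dotProduct_mulVec_add_le _ _) hzero
    _ = _ := by simp only [fiberPart_dotProduct_mulVec_fiberPart]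

end Partition

section FunctionalCalculus

variable {n : Type*} [Fintype n] [DecidableEq n] {A : Matrix n n ℝ}

theorem Matrix.IsHermitian.transpose_cfc (hA : A.IsHermitian) (f : ℝ → ℝ) :
    (hA.cfc f)ᵀ = hA.cfc f := by
  rw [← conjTranspose_eq_transpose_of_trivial, ← hA.cfc_eq]
  exact (IsSelfAdjoint.cfc (f := f) (a := A)).star_eq

theorem Matrix.PosSemidef.cfc_sqrt_mul_self (hA : A.PosSemidef) :
    hA.1.cfc Real.sqrt * hA.1.cfc Real.sqrt = A := by
  have hspec := (posSemidef_iff_isHermitian_and_spectrum_nonneg.mp hA).2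
  rw [← hA.1.cfc_eq, ← cfc_mul _ _ _ (A.finite_spectrum.continuousOn _)
    (A.finite_spectrum.continuousOn _)]
  conv_rhs => rw [← cfc_id' ℝ A (ha := hA.1.isSelfAdjoint)]
  exact cfc_congr fun x hx => Real.mul_self_sqrt (hspec hx)

theorem Matrix.PosSemidef.dotProduct_cfc_sqrt_mulVec (hA : A.PosSemidef) (w : n → ℝ) :
    (hA.1.cfc Real.sqrt *ᵥ w) ⬝ᵥ (hA.1.cfc Real.sqrt *ᵥ w) = w ⬝ᵥ (A *ᵥ w) := by
  rw [dotProduct_mulVec, ← mulVec_transpose, hA.1.transpose_cfc, mulVec_mulVec,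
    hA.cfc_sqrt_mul_self, dotProduct_comm]

-- `f(A) A f(A) = (x ↦ f x ^ 2 * x)(A) ≤ 1` in the Loewner order.
theorem Matrix.IsHermitian.cfc_dotProduct_mulVec_cfc_le (hA : A.IsHermitian) {f : ℝ → ℝ}
    (hf : ∀ x ∈ spectrum ℝ A, f x ^ 2 * x ≤ 1) (u : n → ℝ) :
    (hA.cfc f *ᵥ u) ⬝ᵥ (A *ᵥ (hA.cfc f *ᵥ u)) ≤ u ⬝ᵥ u := by
  have hcont : ∀ g : ℝ → ℝ, ContinuousOn g (spectrum ℝ A) := fun g =>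
    A.finite_spectrum.continuousOn g
  have hle : hA.cfc f * A * hA.cfc f ≤ 1 := by
    rw [← hA.cfc_eq]
    nth_rw 2 [← cfc_id' ℝ A (ha := hA.isSelfAdjoint)]
    rw [← cfc_mul _ _ _ (hcont _) (hcont _), ← cfc_mul _ _ _ (hcont _) (hcont _)]
    exact cfc_le_one _ _ fun x hx => by linarith [hf x hx]
  have := (Matrix.le_iff.mp hle).dotProduct_mulVec_nonneg u
  simp only [star_trivial, sub_mulVec, dotProduct_sub, one_mulVec, sub_nonneg] at this
  rwa [← mulVec_mulVec, ← mulVec_mulVec, dotProduct_mulVec, ← mulVec_transpose,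
    hA.transpose_cfc] at this

end FunctionalCalculus

theorem EuclideanSpace.norm_eq_sqrt_dotProduct {n : Type*} [Fintype n]
    (x : EuclideanSpace ℝ n) : ‖x‖ = Real.sqrt (x.ofLp ⬝ᵥ x.ofLp) := by
  rw [norm_eq_sqrt_real_inner, EuclideanSpace.inner_eq_star_dotProduct, star_trivial]

theorem matOpNorm_le_sqrt_of_dotProduct_le {m n : Type*} [Fintype m] [Fintype n] [DecidableEq n]
    (A : Matrix m n ℝ) {c : ℝ} (hA : ∀ v, (A *ᵥ v) ⬝ᵥ (A *ᵥ v) ≤ c * (v ⬝ᵥ v)) :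
    matOpNorm A ≤ Real.sqrt c := by
  refine ContinuousLinearMap.opNorm_le_bound _ (Real.sqrt_nonneg c) fun v => ?_
  rw [EuclideanSpace.norm_eq_sqrt_dotProduct, EuclideanSpace.norm_eq_sqrt_dotProduct,
    ← Real.sqrt_mul' _ (by simpa using dotProduct_self_star_nonneg v.ofLp)]
  exact Real.sqrt_le_sqrt (hA v)

open scoped Matrix.Norms.L2Operator in
theorem matOpNorm_transpose {n : Type*} [Fintype n] [DecidableEq n] (A : Matrix n n ℝ) :
    matOpNorm Aᵀ = matOpNorm A := by
  rw [← conjTranspose_eq_transpose_of_trivial]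
  exact l2_opNorm_conjTranspose A

theorem tanhE_sq_le_one (β : ℝ≥0∞) (x : ℝ) : tanhE β x ^ 2 ≤ 1 := by
  unfold tanhE
  split_ifs
  · norm_num
  · exact (sq_le_one_iff_abs_le_one _).2 (Real.abs_tanh_lt_one _).le

theorem inv_sqrt_mul_tanhE_sqrt_sq_mul_le_one (β : ℝ≥0∞) (x : ℝ) :
    ((Real.sqrt x)⁻¹ * tanhE β (Real.sqrt x)) ^ 2 * x ≤ 1 := by
  rcases le_or_gt x 0 with hx | hx
  · simp [Real.sqrt_eq_zero'.mpr hx]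
  · rw [mul_pow, inv_pow, Real.sq_sqrt hx.le, mul_right_comm, inv_mul_cancel₀ hx.ne', one_mul]
    exact tanhE_sq_le_one β _

section Dneg

variable {d M : ℕ} {Λ : Finset (Fin d → ℤ)} {part : Λ → Fin M} {h : Matrix Λ Λ ℝ}
  (β : Fin M → ℝ≥0∞) (hb : ∀ m, (blockMat Λ part h m).PosDef)

noncomputable def DnegBlock (m : Fin M) : Matrix {x // part x = m} {x // part x = m} ℝ :=
  (hb m).1.cfc fun μ => (Real.sqrt μ)⁻¹ * tanhE (β m) (Real.sqrt μ)

theorem DnegBlock_transpose (m : Fin M) : (DnegBlock β hb m)ᵀ = DnegBlock β hb m :=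
  (hb m).1.transpose_cfc _

theorem Dneg_apply_of_eq {x y : Λ} {m : Fin M} (hx : part x = m) (hy : part y = m) :
    Dneg Λ part h β hb x y = DnegBlock β hb m ⟨x, hx⟩ ⟨y, hy⟩ := by
  subst hx
  simp [Dneg, DnegBlock, hy]

theorem Dneg_apply_of_ne {x y : Λ} (hxy : part x ≠ part y) : Dneg Λ part h β hb x y = 0 := by
  simp [Dneg, hxy]

theorem Dneg_transpose : (Dneg Λ part h β hb)ᵀ = Dneg Λ part h β hb := by
  ext x y
  rw [transpose_apply]
  by_cases hxy : part y = part x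
  · rw [Dneg_apply_of_eq β hb hxy rfl, Dneg_apply_of_eq β hb rfl hxy]
    exact congrFun (congrFun (DnegBlock_transpose β hb _) _) _
  · rw [Dneg_apply_of_ne β hb hxy, Dneg_apply_of_ne β hb (Ne.symm hxy)]

theorem Dneg_mulVec_restrict (v : Λ → ℝ) (m : Fin M) :
    (fun a : {x // part x = m} => (Dneg Λ part h β hb *ᵥ v) a) =
      DnegBlock β hb m *ᵥ fun a => v a := by
  ext a
  rw [mulVec, dotProduct, Fintype.sum_eq_sum_subtype_of_eq_zero (part · = m) fun y hy => by
    rw [Dneg_apply_of_ne β hb (a.2.trans_ne (Ne.symm hy)), zero_mul]]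
  exact sum_congr rfl fun b _ => by rw [Dneg_apply_of_eq β hb a.2 b.2]

end Dneg

theorem Dneg_mul_sqrt_opNorm_bound_general {d M : ℕ} (Λ : Finset (Fin d → ℤ))
    (part : Λ → Fin M)
    (h : Matrix Λ Λ ℝ) (hPD : h.PosDef)
    (hb : ∀ m, (blockMat Λ part h m).PosDef)
    (G : SimpleGraph (Fin M)) [DecidableRel G.Adj]
    (hcompat : ∀ x y : Λ, part x ≠ part y → ¬ G.Adj (part x) (part y) → h x y = 0)
    (β : Fin M → ℝ≥0∞) :
    matOpNorm (Dneg Λ part h β hb * hPD.1.cfc Real.sqrt) ≤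
      Real.sqrt (G.maxDegree + 1) := by
  rw [← matOpNorm_transpose, transpose_mul, Dneg_transpose, hPD.1.transpose_cfc]
  refine matOpNorm_le_sqrt_of_dotProduct_le _ fun v => ?_
  have hlocal := hPD.posSemidef.dotProduct_mulVec_le_maxDegree_add_one_mul part G hcompat
    (Dneg Λ part h β hb *ᵥ v)
  simp only [Dneg_mulVec_restrict] at hlocal
  calc ((hPD.1.cfc Real.sqrt * Dneg Λ part h β hb) *ᵥ v) ⬝ᵥ
        ((hPD.1.cfc Real.sqrt * Dneg Λ part h β hb) *ᵥ v)
      = (Dneg Λ part h β hb *ᵥ v) ⬝ᵥ (h *ᵥ (Dneg Λ part h β hb *ᵥ v)) := by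
        rw [← mulVec_mulVec, hPD.posSemidef.dotProduct_cfc_sqrt_mulVec]
    _ ≤ (G.maxDegree + 1) * ∑ m, (DnegBlock β hb m *ᵥ fun a => v a) ⬝ᵥ
          (blockMat Λ part h m *ᵥ (DnegBlock β hb m *ᵥ fun a => v a)) := hlocal
    _ ≤ (G.maxDegree + 1) * ∑ m, (fun a : {x // part x = m} => v a) ⬝ᵥ fun a => v a := by
        gcongr with m
        exact (hb m).1.cfc_dotProduct_mulVec_cfc_le
          (fun x _ => inv_sqrt_mul_tanhE_sqrt_sq_mul_le_one (β m) x) _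
    _ = (G.maxDegree + 1) * (v ⬝ᵥ v) := by
        rw [dotProduct, ← Fintype.sum_fiberwise part]
        rfl

/-- `‖D⁻_β h^{1/2}‖ ≤ √(Δ(G_M) + 1)` where `G_M` is the dual graph
of the decomposition. -/
theorem Dneg_mul_sqrt_opNorm_bound {d M : ℕ} (Λ : Finset (Fin d → ℤ))
    (part : Λ → Fin M) (hsurj : Function.Surjective part)
    (h : Matrix Λ Λ ℝ) (hPD : h.PosDef)
    (hb : ∀ m, (blockMat Λ part h m).PosDef)
    (G : SimpleGraph (Fin M)) [DecidableRel G.Adj]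
    (hG : ∀ i j, G.Adj i j ↔ i ≠ j ∧ ∃ x y : Λ, part x = i ∧ part y = j ∧
      dist1 (x : Fin d → ℤ) (y : Fin d → ℤ) = 1)
    (hcompat : ∀ x y : Λ, part x ≠ part y → ¬ G.Adj (part x) (part y) → h x y = 0)
    (β : Fin M → ℝ≥0∞) (hβ : ∀ m, 0 < β m) :
    matOpNorm (Dneg Λ part h β hb * hPD.1.cfc Real.sqrt) ≤
      Real.sqrt (G.maxDegree + 1) :=
  Dneg_mul_sqrt_opNorm_bound_general Λ part h hPD hb G hcompat β
end

section
/- For any n×n matrix A and any α ∈ (0, 1], the α-th power of the Schatten α-quasi-norm is bounded by the sum of the α-th powers of the absolute values of the matrix entries: ∑_j σ_j(A)^α ≤ ∑_{j,k} |A_{j,k}|^α. -/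
open Matrix

/-- The singular values of a real matrix: square roots of the eigenvalues of `AᴴA`
(in no particular order). -/
noncomputable def sVals {m n : Type*} [Fintype m] [Fintype n] [DecidableEq n]
    (A : Matrix m n ℝ) : n → ℝ :=
  fun i => Real.sqrt ((Matrix.isHermitian_conjTranspose_mul_self A).eigenvalues i)

/-- `‖A‖_α^α`: the sum of the `α`-th powers of the singular values. -/
noncomputable def schattenQPow {m n : Type*} [Fintype m] [Fintype n] [DecidableEq n]
    (α : ℝ) (A : Matrix m n ℝ) : ℝ :=
  ∑ i, sVals A i ^ α

/-!
With `U` the unitary eigenvector matrix of the Hermitian matrix `B = AᴴA`, the diagonal entries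
`B_{jj} = ∑_k |U_{jk}|² λ_k` are averages of the eigenvalues with doubly stochastic weights,
so Jensen's inequality for the concave map `t ↦ t^{α/2}` gives
`∑_k λ_k^{α/2} ≤ ∑_j B_{jj}^{α/2}`. Since `B_{jj} = ∑_i |A_{ij}|²`, subadditivity of
`t ↦ t^{α/2}` bounds `B_{jj}^{α/2}` by `∑_i |A_{ij}|^α`.
-/

theorem Real.rpow_sum_le_sum_rpow {ι : Type*} (s : Finset ι) {f : ι → ℝ}
    (hf : ∀ i ∈ s, 0 ≤ f i) {p : ℝ} (hp0 : 0 < p) (hp1 : p ≤ 1) :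
    (∑ i ∈ s, f i) ^ p ≤ ∑ i ∈ s, f i ^ p :=
  Finset.le_sum_of_subadditive_on_pred (· ^ p) (0 ≤ ·) (Real.zero_rpow hp0.ne').le
    (fun _ _ hx hy ↦ Real.rpow_add_le_add_rpow hx hy hp0.le hp1)
    (fun _ _ ↦ add_nonneg) f hf

namespace Matrix

theorem re_conjTranspose_mul_self_apply_self {𝕜 m n : Type*} [RCLike 𝕜] [Fintype m]
    (A : Matrix m n 𝕜) (j : n) : RCLike.re ((Aᴴ * A) j j) = ∑ i, ‖A i j‖ ^ 2 := by
  simp only [mul_apply, conjTranspose_apply, ← starRingEnd_apply, mul_comm (starRingEnd 𝕜 _),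
    RCLike.mul_conj, map_sum, ← RCLike.ofReal_pow, RCLike.ofReal_re]

variable {𝕜 n : Type*} [RCLike 𝕜] [Fintype n] [DecidableEq n]

theorem sum_norm_sq_row_of_mem_unitaryGroup {U : Matrix n n 𝕜} (hU : U ∈ unitaryGroup n 𝕜)
    (i : n) : ∑ j, ‖U i j‖ ^ 2 = 1 := by
  have h := congr_fun₂ (mem_unitaryGroup_iff.mp hU) i i
  simp only [star_eq_conjTranspose, mul_apply, conjTranspose_apply, ← starRingEnd_apply,
    RCLike.mul_conj, one_apply_eq] at h
  exact_mod_cast h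

theorem sum_norm_sq_col_of_mem_unitaryGroup {U : Matrix n n 𝕜} (hU : U ∈ unitaryGroup n 𝕜)
    (j : n) : ∑ i, ‖U i j‖ ^ 2 = 1 := by
  simpa using sum_norm_sq_row_of_mem_unitaryGroup (Unitary.star_mem hU) j

theorem IsHermitian.re_apply_self_eq_sum_eigenvalues {A : Matrix n n 𝕜} (hA : A.IsHermitian)
    (i : n) :
    RCLike.re (A i i) =
      ∑ k, ‖(hA.eigenvectorUnitary : Matrix n n 𝕜) i k‖ ^ 2 * hA.eigenvalues k := by
  conv_lhs => rw [hA.spectral_theorem]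
  simp only [Unitary.conjStarAlgAut_apply, mul_apply, diagonal_apply, star_apply,
    mul_ite, mul_zero, Finset.sum_ite_eq', Finset.mem_univ, if_true, Function.comp_apply, map_sum]
  refine Finset.sum_congr rfl fun k _ ↦ ?_
  rw [mul_right_comm, ← starRingEnd_apply, RCLike.mul_conj, ← RCLike.ofReal_pow,
    ← RCLike.ofReal_mul, RCLike.ofReal_re]

theorem IsHermitian.sum_map_eigenvalues_le_sum_map_re_diag {A : Matrix n n 𝕜}
    (hA : A.IsHermitian) {s : Set ℝ} {f : ℝ → ℝ} (hf : ConcaveOn ℝ s f)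
    (hs : ∀ k, hA.eigenvalues k ∈ s) :
    ∑ k, f (hA.eigenvalues k) ≤ ∑ i, f (RCLike.re (A i i)) := by
  have hU := hA.eigenvectorUnitary.2
  set w : n → n → ℝ := fun i k ↦ ‖(hA.eigenvectorUnitary : Matrix n n 𝕜) i k‖ ^ 2
  calc ∑ k, f (hA.eigenvalues k)
      = ∑ k, (∑ i, w i k) * f (hA.eigenvalues k) := by
        simp only [w, sum_norm_sq_col_of_mem_unitaryGroup hU, one_mul]
    _ = ∑ i, ∑ k, w i k • f (hA.eigenvalues k) := by
        simp only [Finset.sum_mul, smul_eq_mul]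
        exact Finset.sum_comm
    _ ≤ ∑ i, f (∑ k, w i k • hA.eigenvalues k) := Finset.sum_le_sum fun i _ ↦
        hf.le_map_sum (fun _ _ ↦ sq_nonneg _) (sum_norm_sq_row_of_mem_unitaryGroup hU i)
          fun k _ ↦ hs k
    _ = ∑ i, f (RCLike.re (A i i)) := by
        simp only [smul_eq_mul, w, hA.re_apply_self_eq_sum_eigenvalues]

end Matrix

theorem sVals_rpow {m n : Type*} [Fintype m] [Fintype n] [DecidableEq n] (A : Matrix m n ℝ)
    (i : n) (α : ℝ) :
    sVals A i ^ α = (isHermitian_conjTranspose_mul_self A).eigenvalues i ^ (α / 2) := by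
  rw [sVals, Real.sqrt_eq_rpow, ← Real.rpow_mul
    ((posSemidef_conjTranspose_mul_self A).eigenvalues_nonneg i), one_div_mul_eq_div]

/-- `∑_j σ_j(A)^α ≤ ∑_{j,k} |A_{j,k}|^α` for `0 < α ≤ 1`. -/
theorem schattenQPow_le_sum_entries {n : Type*} [Fintype n] [DecidableEq n]
    (A : Matrix n n ℝ) (α : ℝ) (hα0 : 0 < α) (hα1 : α ≤ 1) :
    schattenQPow α A ≤ ∑ j, ∑ k, |A j k| ^ α := by
  have hB := isHermitian_conjTranspose_mul_self A
  calc schattenQPow α A = ∑ k, hB.eigenvalues k ^ (α / 2) :=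
        Finset.sum_congr rfl fun k _ ↦ sVals_rpow A k α
    _ ≤ ∑ j, RCLike.re ((Aᴴ * A) j j) ^ (α / 2) :=
        hB.sum_map_eigenvalues_le_sum_map_re_diag
          (Real.concaveOn_rpow (by positivity) (by linarith))
          (posSemidef_conjTranspose_mul_self A).eigenvalues_nonneg
    _ = ∑ j, (∑ k, ‖A k j‖ ^ 2) ^ (α / 2) := by
        simp only [re_conjTranspose_mul_self_apply_self]
    _ ≤ ∑ j, ∑ k, (‖A k j‖ ^ 2) ^ (α / 2) := Finset.sum_le_sum fun j _ ↦
        Real.rpow_sum_le_sum_rpow _ (fun k _ ↦ sq_nonneg _) (by positivity) (by linarith)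
    _ = ∑ j, ∑ k, |A j k| ^ α := by
        rw [Finset.sum_comm]
        congr! 2 with j - k -
        rw [← Real.rpow_natCast, ← Real.rpow_mul (norm_nonneg _), Real.norm_eq_abs]
        congr 1
        push_cast
        ring
end

section
/- Let Λ be a finite subset of ℤ^d, Λ₀ ⊆ Λ, and η > 0. Then ∑_{x ∈ Λ₀} ∑_{y ∈ Λ∖Λ₀} e^{−η|x−y|₁} ≤ (∑_{z ∈ ℤ^d} e^{−η|z|₁})² · |∂Λ₀|, where ∂Λ₀ = {x ∈ Λ₀ : ∃ y ∈ Λ∖Λ₀ with |x−y|₁ = 1} is the boundary of Λ₀ in Λ. -/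
open Finset

lemma sum_sum_sum_mul_eq_sum_mul_sum {α β γ R : Type*} [NonUnitalNonAssocSemiring R]
    (A : Finset α) (C : Finset β) (B : Finset γ) (f : α → γ → R) (g : γ → β → R) :
    ∑ x ∈ A, ∑ y ∈ C, ∑ z ∈ B, f x z * g z y = ∑ z ∈ B, (∑ x ∈ A, f x z) * ∑ y ∈ C, g z y := by
  simp_rw [sum_mul_sum]
  rw [sum_comm (s := B)]
  exact sum_congr rfl fun _ _ => sum_comm

section dist1

variable {d : ℕ}

lemma dist1_comm (x y : Fin d → ℤ) : dist1 x y = dist1 y x :=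
  sum_congr rfl fun _ _ => abs_sub_comm _ _

lemma dist1_eq_dist1_sub_zero (x z : Fin d → ℤ) : dist1 x z = dist1 (x - z) 0 :=
  sum_congr rfl fun _ _ => by simp

lemma dist1_cons_zero (a : ℤ) (z : Fin d → ℤ) :
    dist1 (Fin.cons a z : Fin (d + 1) → ℤ) 0 = |a| + dist1 z 0 := by
  simp [dist1, Fin.sum_univ_succ]

end dist1

section expDecay

variable {η : ℝ}

lemma summable_exp_neg_mul_abs_int (hη : 0 < η) :
    Summable fun n : ℤ => Real.exp (-η * |(n : ℝ)|) := by
  have hlt : Real.exp (-η) < 1 := Real.exp_lt_one_iff.mpr (neg_neg_of_pos hη)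
  have hgeom := summable_geometric_of_lt_one (Real.exp_nonneg _) hlt
  rw [summable_int_iff_summable_nat_and_neg]
  constructor <;>
  · refine hgeom.congr fun n => ?_
    simp [← Real.exp_nat_mul, mul_comm]

lemma summable_exp_neg_mul_dist1_zero (hη : 0 < η) :
    ∀ d : ℕ, Summable fun z : Fin d → ℤ => Real.exp (-η * (dist1 z 0 : ℝ))
  | 0 => Summable.of_finite
  | d + 1 => by
    have hprod := (summable_exp_neg_mul_abs_int hη).mul_of_nonneg
      (summable_exp_neg_mul_dist1_zero hη d)
      (fun _ => Real.exp_nonneg _) (fun _ => Real.exp_nonneg _)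
    rw [← (Fin.consEquiv fun _ : Fin (d + 1) => ℤ).summable_iff]
    refine hprod.congr fun p => ?_
    simp only [Function.comp_apply, Fin.consEquiv, Equiv.coe_fn_mk, dist1_cons_zero, ← Real.exp_add]
    push_cast
    ring_nf

lemma sum_exp_neg_mul_dist1_le_tsum (hη : 0 < η) {d : ℕ} (A : Finset (Fin d → ℤ))
    (z : Fin d → ℤ) :
    ∑ x ∈ A, Real.exp (-η * (dist1 x z : ℝ)) ≤
      ∑' w : Fin d → ℤ, Real.exp (-η * (dist1 w 0 : ℝ)) := by
  have htrans : ∑ x ∈ A, Real.exp (-η * (dist1 x z : ℝ)) =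
      ∑ w ∈ A.image (· - z), Real.exp (-η * (dist1 w 0 : ℝ)) := by
    rw [sum_image fun _ _ _ _ => sub_left_inj.mp]
    simp_rw [dist1_eq_dist1_sub_zero _ z]
  rw [htrans]
  exact (summable_exp_neg_mul_dist1_zero hη d).sum_le_tsum _ fun _ _ => Real.exp_nonneg _

lemma exp_neg_mul_dist1_eq_mul_of_eq_add {d : ℕ} {x y z : Fin d → ℤ}
    (h : dist1 x y = dist1 x z + dist1 z y) :
    Real.exp (-η * (dist1 x y : ℝ)) =
      Real.exp (-η * (dist1 x z : ℝ)) * Real.exp (-η * (dist1 z y : ℝ)) := by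
  rw [← Real.exp_add, h]
  push_cast
  ring_nf

lemma exp_neg_mul_dist1_le_sum_mul {d : ℕ} {B : Finset (Fin d → ℤ)} {x y z : Fin d → ℤ}
    (hz : z ∈ B) (h : dist1 x y = dist1 x z + dist1 z y) :
    Real.exp (-η * (dist1 x y : ℝ)) ≤
      ∑ w ∈ B, Real.exp (-η * (dist1 x w : ℝ)) * Real.exp (-η * (dist1 w y : ℝ)) := by
  rw [exp_neg_mul_dist1_eq_mul_of_eq_add h]
  exact single_le_sum (f := fun w => Real.exp (-η * (dist1 x w : ℝ)) *
    Real.exp (-η * (dist1 w y : ℝ))) (fun _ _ => by positivity) hz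

end expDecay

theorem exp_decay_boundary_area_bound_general {d : ℕ} (Λ Λ₀ : Finset (Fin d → ℤ))
    (η : ℝ) (hη : 0 < η)
    (hgeo : ∀ x ∈ Λ₀, ∀ y ∈ Λ \ Λ₀, ∃ z ∈ Λ₀,
      (∃ w ∈ Λ \ Λ₀, dist1 z w = 1) ∧ dist1 x y = dist1 x z + dist1 z y) :
    ∑ x ∈ Λ₀, ∑ y ∈ Λ \ Λ₀, Real.exp (-η * (dist1 x y : ℝ)) ≤
      (∑' z : Fin d → ℤ, Real.exp (-η * (dist1 z 0 : ℝ))) ^ 2 *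
        ((Λ₀.filter fun x => ∃ y ∈ Λ \ Λ₀, dist1 x y = 1).card : ℝ) := by
  set S := ∑' z : Fin d → ℤ, Real.exp (-η * (dist1 z 0 : ℝ))
  set B := Λ₀.filter fun x => ∃ y ∈ Λ \ Λ₀, dist1 x y = 1
  calc ∑ x ∈ Λ₀, ∑ y ∈ Λ \ Λ₀, Real.exp (-η * (dist1 x y : ℝ))
      ≤ ∑ x ∈ Λ₀, ∑ y ∈ Λ \ Λ₀, ∑ z ∈ B,
          Real.exp (-η * (dist1 x z : ℝ)) * Real.exp (-η * (dist1 z y : ℝ)) := by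
        gcongr with x hx y hy
        obtain ⟨z, hz, hzB, hxzy⟩ := hgeo x hx y hy
        exact exp_neg_mul_dist1_le_sum_mul (mem_filter.mpr ⟨hz, hzB⟩) hxzy
    _ = ∑ z ∈ B, (∑ x ∈ Λ₀, Real.exp (-η * (dist1 x z : ℝ))) *
          ∑ y ∈ Λ \ Λ₀, Real.exp (-η * (dist1 z y : ℝ)) :=
        sum_sum_sum_mul_eq_sum_mul_sum _ _ _ _ _
    _ ≤ ∑ _z ∈ B, S * S := by
        gcongr with z
        · exact sum_exp_neg_mul_dist1_le_tsum hη Λ₀ z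
        · simpa only [dist1_comm z] using sum_exp_neg_mul_dist1_le_tsum hη (Λ \ Λ₀) z
    _ = S ^ 2 * (B.card : ℝ) := by
        rw [sum_const, nsmul_eq_mul, sq, mul_comm]

/-- the double sum of `e^{-η|x-y|₁}` over `x ∈ Λ₀`, `y ∈ Λ∖Λ₀` is
bounded by `(∑_{z∈ℤ^d} e^{-η|z|₁})² · |∂Λ₀|`, given the geodesic-crossing
property of the boundary. -/
theorem exp_decay_boundary_area_bound {d : ℕ} (Λ Λ₀ : Finset (Fin d → ℤ))
    (hsub : Λ₀ ⊆ Λ) (η : ℝ) (hη : 0 < η)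
    (hgeo : ∀ x ∈ Λ₀, ∀ y ∈ Λ \ Λ₀, ∃ z ∈ Λ₀,
      (∃ w ∈ Λ \ Λ₀, dist1 z w = 1) ∧ dist1 x y = dist1 x z + dist1 z y) :
    ∑ x ∈ Λ₀, ∑ y ∈ Λ \ Λ₀, Real.exp (-η * (dist1 x y : ℝ)) ≤
      (∑' z : Fin d → ℤ, Real.exp (-η * (dist1 z 0 : ℝ))) ^ 2 *
        ((Λ₀.filter fun x => ∃ y ∈ Λ \ Λ₀, dist1 x y = 1).card : ℝ) :=
  exp_decay_boundary_area_bound_general Λ Λ₀ η hη hgeo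
end
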